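/- For every real z ∈ (0,1), 𝔓_h(z) + 𝔓_h(1−z) = 1; that is, (3Γ(2/3)/Γ(1/3)²) · [z^{1/3} · ₂F₁(1/3,2/3;4/3;z) + (1−z)^{1/3} · ₂F₁(1/3,2/3;4/3;1−z)] = 1. -/

import Mathlib

open scoped BigOperators

/-- Rising factorial (Pochhammer symbol) `(x)_k = x(x+1)⋯(x+k-1)`. -/
noncomputable def pochR (x : ℝ) (k : ℕ) : ℝ := ∏ i ∈ Finset.range k, (x + i)

/-- The Gauss hypergeometric series `₂F₁(a,b;c;z)`. -/
noncomputable def F21R (a b c z : ℝ) : ℝ :=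
  ∑' k : ℕ, pochR a k * pochR b k / (pochR c k * (Nat.factorial k : ℝ)) * z ^ k

/-- The generalized hypergeometric series `₃F₂(a₁,a₂,a₃;b₁,b₂;z)`. -/
noncomputable def F32R (a₁ a₂ a₃ b₁ b₂ z : ℝ) : ℝ :=
  ∑' k : ℕ, pochR a₁ k * pochR a₂ k * pochR a₃ k /
      (pochR b₁ k * pochR b₂ k * (Nat.factorial k : ℝ)) * z ^ k

/-- Cardy's horizontal crossing function `𝔓_h`. -/
noncomputable def Ph (z : ℝ) : ℝ :=
  3 * Real.Gamma (2/3) / (Real.Gamma (1/3)) ^ 2 * z ^ ((1:ℝ)/3) *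
    F21R (1/3) (2/3) (4/3) z

/-- Watts's horizontal-vertical crossing function `𝔓_hv`. -/
noncomputable def Phv (z : ℝ) : ℝ :=
  Ph z - Real.sqrt 3 / (2 * Real.pi) * z * F32R 1 1 (4/3) 2 (5/3) z

/-- Cardy's cluster-number function `𝔑_h`. -/
noncomputable def Nh (z : ℝ) : ℝ :=
  1/2 - Real.sqrt 3 / (4 * Real.pi) *
    (Real.log (1 - z) + (1 - z) * F32R 1 1 (4/3) 2 (5/3) (1 - z))

/-!
Expanding `(1 - t)^(b-1)` in its binomial series and integrating term by term shows that the
incomplete beta integral `∫₀^z t^(a-1) (1-t)^(b-1) dt` equals `z^a / a · ₂F₁(a, 1-b; a+1; z)`.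
For `a = b = 1/3` this makes `𝔓_h(z)` the normalized incomplete beta function
`B_z(1/3, 1/3) / B(1/3, 1/3)`, and the substitution `t ↦ 1 - t` splits `B(1/3, 1/3)` as
`B_z(1/3, 1/3) + B_{1-z}(1/3, 1/3)`.
-/

open Real MeasureTheory
open scoped Nat

lemma pochR_zero (x : ℝ) : pochR x 0 = 1 := by simp [pochR]

lemma pochR_succ (x : ℝ) (k : ℕ) : pochR x (k + 1) = pochR x k * (x + k) := by
  simp [pochR, Finset.prod_range_succ]

lemma pochR_succ' (x : ℝ) (k : ℕ) : pochR x (k + 1) = x * pochR (x + 1) k := by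
  simp only [pochR, Finset.prod_range_succ', Nat.cast_succ, Nat.cast_zero, add_zero, mul_comm x]
  exact congrArg (· * x) (Finset.prod_congr rfl fun i _ => by ring)

lemma pochR_pos {x : ℝ} (hx : 0 < x) (k : ℕ) : 0 < pochR x k :=
  Finset.prod_pos fun i _ => by positivity

lemma pochR_eq_ascPochhammer_eval (x : ℝ) (k : ℕ) : pochR x k = (ascPochhammer ℝ k).eval x := by
  induction k with
  | zero => simp [pochR_zero]
  | succ k ih => rw [pochR_succ, ascPochhammer_succ_eval, ih]

lemma pochR_mul_add (x : ℝ) (k : ℕ) : pochR x k * (x + k) = x * pochR (x + 1) k := by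
  rw [← pochR_succ, pochR_succ']

lemma ringChoose_eq_pochR_div_factorial (c : ℝ) (k : ℕ) :
    Ring.choose (c + k - 1) k = pochR c k / k ! := by
  rw [← Ring.multichoose_eq, eq_div_iff (by positivity), mul_comm, ← nsmul_eq_mul,
    Ring.factorial_nsmul_multichoose_eq_ascPochhammer, Polynomial.ascPochhammer_smeval_eq_eval,
    pochR_eq_ascPochhammer_eval]

lemma hasSum_pochR_mul_pow {c t : ℝ} (ht : |t| < 1) :
    HasSum (fun k => pochR c k / k ! * t ^ k) ((1 - t) ^ (-c)) := by
  have h := (Real.one_div_one_sub_rpow_hasFPowerSeriesOnBall_zero c).hasSum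
    (y := t) (by simpa [enorm_eq_nnnorm, ← NNReal.coe_lt_coe] using ht)
  simpa [FormalMultilinearSeries.ofScalars_apply_eq, ringChoose_eq_pochR_div_factorial, mul_comm,
    Real.rpow_neg (show 0 ≤ 1 - t by linarith [le_abs_self t])] using h

lemma summable_abs_pochR_mul_pow {c t : ℝ} (ht : |t| < 1) :
    Summable (fun k => |pochR c k / k ! * t ^ k|) := by
  have hr := (Real.one_div_one_sub_rpow_hasFPowerSeriesOnBall_zero c).r_le
  have h := FormalMultilinearSeries.summable_norm_apply _ (x := t)
    (lt_of_lt_of_le (by simpa [enorm_eq_nnnorm, ← NNReal.coe_lt_coe] using ht) hr)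
  simpa [FormalMultilinearSeries.ofScalars_apply_eq, ringChoose_eq_pochR_div_factorial, abs_mul,
    abs_div, mul_comm] using h

noncomputable def incBeta (a b z : ℝ) : ℝ := ∫ t in (0:ℝ)..z, t ^ (a - 1) * (1 - t) ^ (b - 1)

lemma integral_rpow_sub_one_add_nat {a : ℝ} (z : ℝ) (ha : 0 < a) (k : ℕ) :
    ∫ t in (0:ℝ)..z, t ^ (a - 1 + k) = z ^ (a + k) / (a + k) := by
  have hk : 0 < a + k := by positivity
  rw [integral_rpow (Or.inl (by linarith)), show a - 1 + k + 1 = a + k by ring,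
    Real.zero_rpow hk.ne', sub_zero]

lemma pochR_div_factorial_mul_rpow_add_div (a c z : ℝ) (ha : 0 < a) (hz : 0 ≤ z) (k : ℕ) :
    pochR c k / k ! * (z ^ (a + k) / (a + k)) =
      z ^ a / a * (pochR a k * pochR c k / (pochR (a + 1) k * k !) * z ^ k) := by
  have hk : 0 < a + k := by positivity
  have hpoch := pochR_mul_add a k
  have := pochR_pos (show 0 < a + 1 by linarith) k
  rw [Real.rpow_add' hz hk.ne', Real.rpow_natCast]
  field_simp
  linear_combination -(z ^ a * z ^ k * pochR c k) * hpoch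

theorem incBeta_eq_rpow_mul_F21R {a b z : ℝ} (ha : 0 < a) (hz0 : 0 ≤ z) (hz1 : z < 1) :
    incBeta a b z = z ^ a / a * F21R a (1 - b) (a + 1) z := by
  set c : ℕ → ℝ := fun k => pochR (1 - b) k / (k ! : ℝ)
  set F : ℕ → ℝ → ℝ := fun k t => c k * t ^ (a - 1 + k)
  have hz : |z| < 1 := by rwa [abs_of_nonneg hz0]
  have hF_int : ∀ k, Integrable (F k) (volume.restrict (Set.Ioc 0 z)) := fun k =>
    ((intervalIntegrable_iff_integrableOn_Ioc_of_le hz0).mp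
      (intervalIntegral.intervalIntegrable_rpow' (r := a - 1 + k)
        (by linarith [(k.cast_nonneg : (0:ℝ) ≤ k)]))).const_mul (c k)
  have hF_integral : ∀ k, ∫ t in Set.Ioc 0 z, F k t = c k * (z ^ (a + k) / (a + k)) := fun k => by
    rw [integral_const_mul, ← intervalIntegral.integral_of_le hz0,
      integral_rpow_sub_one_add_nat z ha]
  have hF_norm : ∀ k, ∫ t in Set.Ioc 0 z, ‖F k t‖ = |c k| * (z ^ (a + k) / (a + k)) := fun k => by
    rw [← integral_rpow_sub_one_add_nat z ha, ← intervalIntegral.integral_const_mul,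
      intervalIntegral.integral_of_le hz0]
    refine setIntegral_congr_fun measurableSet_Ioc fun t ht => ?_
    simp only [F, norm_mul, Real.norm_eq_abs, abs_of_nonneg (Real.rpow_nonneg ht.1.le _)]
  have hF_sum : Summable fun k => ∫ t in Set.Ioc 0 z, ‖F k t‖ := by
    refine ((summable_abs_pochR_mul_pow (c := 1 - b) hz).mul_left (z ^ a / a)).of_nonneg_of_le
      (fun k => ?_) fun k => ?_
    · rw [hF_norm]; positivity
    · rw [hF_norm, abs_mul, abs_pow, abs_of_nonneg hz0,
        Real.rpow_add' hz0 (show 0 < a + k by positivity).ne', Real.rpow_natCast]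
      calc |c k| * (z ^ a * z ^ k / (a + k)) = |c k| * z ^ k * (z ^ a / (a + k)) := by ring
        _ ≤ |c k| * z ^ k * (z ^ a / a) := by gcongr; exact le_add_of_nonneg_right k.cast_nonneg
        _ = _ := by ring
  have hF_tsum : ∀ t ∈ Set.Ioc 0 z, ∑' k, F k t = t ^ (a - 1) * (1 - t) ^ (b - 1) := by
    intro t ht
    have ht1 : |t| < 1 := by rw [abs_of_pos ht.1]; linarith [ht.2]
    rw [show b - 1 = -(1 - b) by ring, ← (hasSum_pochR_mul_pow ht1).tsum_eq, ← tsum_mul_left]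
    refine tsum_congr fun k => ?_
    simp only [F, Real.rpow_add ht.1, Real.rpow_natCast]
    ring
  calc incBeta a b z = ∫ t in Set.Ioc 0 z, ∑' k, F k t := by
        rw [incBeta, intervalIntegral.integral_of_le hz0]
        exact setIntegral_congr_fun measurableSet_Ioc fun t ht => (hF_tsum t ht).symm
    _ = ∑' k, c k * (z ^ (a + k) / (a + k)) := by
        rw [← integral_tsum_of_summable_integral_norm hF_int hF_sum]
        exact tsum_congr hF_integral
    _ = z ^ a / a * F21R a (1 - b) (a + 1) z := by
        rw [F21R, ← tsum_mul_left]
        exact tsum_congr (pochR_div_factorial_mul_rpow_add_div a (1 - b) z ha hz0)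

lemma intervalIntegrable_rpow_mul_one_sub_rpow {a : ℝ} (b : ℝ) {z : ℝ} (ha : 0 < a) (hz : z < 1) :
    IntervalIntegrable (fun t => t ^ (a - 1) * (1 - t) ^ (b - 1)) volume 0 z := by
  refine (intervalIntegral.intervalIntegrable_rpow' (by linarith)).mul_continuousOn ?_
  intro t ht
  have ht1 : 1 - t ≠ 0 := (sub_pos.2 (ht.2.trans_lt (max_lt one_pos hz))).ne'
  exact ((Real.continuousAt_rpow_const _ _ (Or.inl ht1)).comp
    (continuousAt_const.sub continuousAt_id)).continuousWithinAt

lemma incBeta_add_incBeta_one_sub {a b z : ℝ} (ha : 0 < a) (hb : 0 < b) (hz : z ∈ Set.Ioo 0 1) :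
    incBeta a b z + incBeta b a (1 - z) = incBeta a b 1 := by
  have hleft := intervalIntegrable_rpow_mul_one_sub_rpow b ha hz.2
  have hright : IntervalIntegrable (fun t => t ^ (a - 1) * (1 - t) ^ (b - 1)) volume z 1 := by
    have := (intervalIntegrable_rpow_mul_one_sub_rpow a hb
      (show 1 - z < 1 by linarith [hz.1])).comp_sub_left 1
    simpa only [sub_zero, sub_sub_cancel, mul_comm] using this.symm
  have hflip : incBeta b a (1 - z) = ∫ t in z..1, t ^ (a - 1) * (1 - t) ^ (b - 1) := by
    have := intervalIntegral.integral_comp_sub_left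
      (fun t => t ^ (b - 1) * (1 - t) ^ (a - 1)) (a := z) (b := 1) 1
    simp only [sub_self, sub_sub_cancel] at this
    rw [incBeta, ← this]
    exact intervalIntegral.integral_congr fun t _ => mul_comm _ _
  rw [hflip, incBeta, incBeta, intervalIntegral.integral_add_adjacent_intervals hleft hright]

lemma incBeta_one {a b : ℝ} (ha : 0 < a) (hb : 0 < b) :
    incBeta a b 1 = Gamma a * Gamma b / Gamma (a + b) := by
  have h := Complex.betaIntegral_eq_Gamma_mul_div a b (by simpa) (by simpa)
  rw [← Complex.ofReal_add, Complex.Gamma_ofReal, Complex.Gamma_ofReal, Complex.Gamma_ofReal,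
    Complex.betaIntegral, ← Complex.ofReal_mul, ← Complex.ofReal_div] at h
  refine Complex.ofReal_injective (h ▸ ?_)
  rw [incBeta, ← intervalIntegral.integral_ofReal]
  refine intervalIntegral.integral_congr fun t ht => ?_
  rw [Set.uIcc_of_le zero_le_one] at ht
  push_cast
  rw [Complex.ofReal_cpow ht.1, Complex.ofReal_cpow (by linarith [ht.2])]
  push_cast
  rfl

lemma Ph_eq_incBeta {w : ℝ} (hw0 : 0 ≤ w) (hw1 : w < 1) :
    Ph w = Gamma (2/3) / Gamma (1/3) ^ 2 * incBeta (1/3) (1/3) w := by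
  rw [Ph, incBeta_eq_rpow_mul_F21R (by norm_num) hw0 hw1,
    show (1:ℝ) - 1/3 = 2/3 by norm_num, show (1:ℝ)/3 + 1 = 4/3 by norm_num]
  ring

/-- `𝔓_h(z) + 𝔓_h(1−z) = 1` for `z ∈ (0,1)`. -/
theorem stmt2 (z : ℝ) (hz : z ∈ Set.Ioo (0:ℝ) 1) : Ph z + Ph (1 - z) = 1 := by
  rw [Ph_eq_incBeta hz.1.le hz.2, Ph_eq_incBeta (by linarith [hz.2]) (by linarith [hz.1]),
    ← mul_add, incBeta_add_incBeta_one_sub (by norm_num) (by norm_num) hz,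
    incBeta_one (by norm_num) (by norm_num), show (1:ℝ)/3 + 1/3 = 2/3 by norm_num]
  have := (Gamma_pos_of_pos (show (0:ℝ) < 1/3 by norm_num)).ne'
  have := (Gamma_pos_of_pos (show (0:ℝ) < 2/3 by norm_num)).ne'
  field_simp
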